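/- Let r ≥ 1. Suppose x ∈ ℝ⁺ and P is a finite collection of bitiles with x ∈ I_P for each P ∈ P, and P = ⋃_{T∈T} T where T is either a collection of u-overlapping trees which are td-maximal among u-overlapping trees contained in P, or a properly-sorted collection of l-overlapping trees. Then for any collection of real coefficients {c_P}_{P∈P}, sup_{ξ∈ℝ⁺} ‖ (Σ_{P∈P, |I_P|<2^k} c_P 1_{ω_{P_u}}(ξ))_{k∈ℤ} ‖_{V^r_k} ≤ C · sup_{T∈T} ‖ Σ_{P∈T} c_P 1_{ω_{P_u}} ‖_{V^r}, where the left-hand V^r norm is the r-variation in k ∈ ℤ and the right-hand V^r norm is the r-variation in ξ ∈ ℝ⁺. -/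

import Mathlib

open MeasureTheory Set Filter
open scoped ENNReal NNReal Classical BigOperators RealInnerProductSpace

noncomputable section

/-- The binary digit of `x` in position `n+1` to the left of the point
(terminating expansion for dyadic rationals). -/
def digit (n : ℤ) (x : ℝ) : ℤ := ⌊x / 2 ^ n⌋ % 2

/-- Bitwise addition `⊕` on nonnegative reals. -/
def wXor (x y : ℝ) : ℝ := ∑' n : ℤ, (((digit n x + digit n y) % 2 : ℤ) : ℝ) * 2 ^ n

/-- The `n`-th digit of the bitwise product `x ⊗ y`. -/
def wMulDigit (n : ℤ) (x y : ℝ) : ℤ :=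
  ⌊∑' m : ℤ, ((digit (n - m) x * digit m y : ℤ) : ℝ)⌋ % 2

/-- Bitwise multiplication `⊗` on nonnegative reals. -/
def wMul (x y : ℝ) : ℝ := ∑' n : ℤ, ((wMulDigit n x y : ℤ) : ℝ) * 2 ^ n

/-- The Walsh character `e(x) = exp (i π d₋₁(x))`. -/
def walshe (x : ℝ) : ℝ := (-1 : ℝ) ^ (digit (-1) x)

/-- The Walsh–Fourier transform on `ℝ⁺`; it is involutive, so it also serves
as the inverse Walsh–Fourier transform `ˇ`. -/
def walshFT (f : ℝ → ℝ) (ξ : ℝ) : ℝ := ∫ x in Set.Ici (0 : ℝ), walshe (wMul ξ x) * f x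

/-- Lebesgue measure on `ℝ⁺`. -/
def μplus : Measure ℝ := volume.restrict (Set.Ici 0)

/-- `L^p` norm (real exponent `p`) of an `ℝ≥0∞`-valued function. -/
def lpNormE (p : ℝ) (μ : Measure ℝ) (F : ℝ → ℝ≥0∞) : ℝ≥0∞ := (∫⁻ x, F x ^ p ∂μ) ^ (1 / p)

/-- The `r`-variation norm of `m` on the domain `D`. -/
def vnorm {ι E : Type*} [LinearOrder ι] [NormedAddCommGroup E] (r : ℝ) (D : Set ι)
    (m : ι → E) : ℝ≥0∞ :=
  (⨆ ξ ∈ D, (‖m ξ‖₊ : ℝ≥0∞)) +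
    ⨆ (N : ℕ) (u : Fin (N + 1) → ι) (_ : StrictMono u) (_ : ∀ i, u i ∈ D),
      (∑ i : Fin N, (‖m (u i.succ) - m (u i.castSucc)‖₊ : ℝ≥0∞) ^ r) ^ (1 / r)

/-- The Walsh `L^q`-multiplier norm. -/
def Mq (q : ℝ) (m : ℝ → ℝ) : ℝ≥0∞ :=
  ⨆ (g : ℝ → ℝ) (_ : eLpNorm g (ENNReal.ofReal q) μplus = 1),
    eLpNorm (walshFT fun ξ => m ξ * walshFT g ξ) (ENNReal.ofReal q) μplus

/-- The Walsh `L^q`-maximal-multiplier norm of a sequence of multipliers. -/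
def Mqstar (q : ℝ) (m : ℤ → ℝ → ℝ) : ℝ≥0∞ :=
  ⨆ (g : ℝ → ℝ) (_ : eLpNorm g (ENNReal.ofReal q) μplus = 1),
    lpNormE q μplus fun x => ⨆ k : ℤ, (‖walshFT (fun ξ => m k ξ * walshFT g ξ) x‖₊ : ℝ≥0∞)

/-- The `s`-variation `L^q`-multiplier norm of a sequence of multipliers. -/
def Mqs (q s : ℝ) (m : ℤ → ℝ → ℝ) : ℝ≥0∞ :=
  ⨆ (g : ℝ → ℝ) (_ : eLpNorm g (ENNReal.ofReal q) μplus = 1),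
    lpNormE q μplus fun x =>
      vnorm s (Set.univ : Set ℤ) fun k => walshFT (fun ξ => m k ξ * walshFT g ξ) x

/-- Dyadic intervals `[n 2^k, (n+1) 2^k)`. -/
def IsDyadic (I : Set ℝ) : Prop :=
  ∃ n k : ℤ, I = Set.Ico ((n : ℝ) * 2 ^ k) (((n : ℝ) + 1) * 2 ^ k)

/-- Dyadic intervals of length `2^k`. -/
def IsDyadicLen (k : ℤ) (ω : Set ℝ) : Prop :=
  ∃ n : ℤ, ω = Set.Ico ((n : ℝ) * 2 ^ k) (((n : ℝ) + 1) * 2 ^ k)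

/-- The lower half of an interval. -/
def lowerHalf (ω : Set ℝ) : Set ℝ := ω ∩ Set.Iio ((sInf ω + sSup ω) / 2)

/-- The upper half of an interval. -/
def upperHalf (ω : Set ℝ) : Set ℝ := ω ∩ Set.Ici ((sInf ω + sSup ω) / 2)

/-- A bitile `I × ω ⊆ ℝ⁺ × ℝ⁺` : a rectangle of dyadic intervals of area `2`. -/
structure Bitile where
  I : Set ℝ
  ω : Set ℝ
  hI : IsDyadic I
  hω : IsDyadic ω
  hIsub : I ⊆ Set.Ici 0
  hωsub : ω ⊆ Set.Ici 0
  harea : volume I * volume ω = 2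

/-- The `L²`-normalized Walsh wave packet of the tile `I × ω`. -/
def wavePacket (I ω : Set ℝ) (x : ℝ) : ℝ :=
  Real.sqrt (volume I).toReal * walshFT (Set.indicator ω fun _ => (1 : ℝ)) (wXor x (sInf I))

/-- `⟨f, φ_{P_l}⟩`, the pairing of `f` with the wave packet of the lower tile of `P`. -/
def walshCoef (P : Bitile) (f : ℝ → ℝ) : ℝ :=
  ∫ y in Set.Ici (0 : ℝ), f y * wavePacket P.I (lowerHalf P.ω) y

/-- The partial order on bitiles. -/
def Bitile.le (P Q : Bitile) : Prop := P.I ⊆ Q.I ∧ Q.ω ⊆ P.ω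

/-- Convexity of a set of bitiles. -/
def ConvexBitiles (S : Set Bitile) : Prop :=
  ∀ P₁ P₂ P₃ : Bitile, P₁ ∈ S → P₃ ∈ S → Bitile.le P₁ P₂ → Bitile.le P₂ P₃ → P₂ ∈ S

/-- The truncated partial Walsh-sum operator attached to a collection `Ps` of bitiles. -/
def Sk (Ps : Set Bitile) (f : ℝ → ℝ) (k : ℤ) (ξ x : ℝ) : ℝ :=
  ∑ᶠ (P : Bitile) (_ : P ∈ Ps ∧ volume P.I < 2 ^ k),
    walshCoef P f * wavePacket P.I (lowerHalf P.ω) x *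
      Set.indicator (upperHalf P.ω) (fun _ => (1 : ℝ)) ξ

/-- The partial Walsh-sum operator `S[f](ξ,x) = (f̂ 1_{[0,ξ)})ˇ(x)`. -/
def Spartial (f : ℝ → ℝ) (ξ x : ℝ) : ℝ :=
  walshFT (fun η => Set.indicator (Set.Ico 0 ξ) (fun _ => (1 : ℝ)) η * walshFT f η) x

/-- A tree of bitiles with top data `(ξtop, Itop)`. -/
structure WTree where
  carrier : Set Bitile
  ξtop : ℝ
  Itop : Set ℝ

/-- The defining conditions of a tree. -/
def IsTree (T : WTree) : Prop :=
  IsDyadic T.Itop ∧ 0 ≤ T.ξtop ∧ ∀ P ∈ T.carrier, P.I ⊆ T.Itop ∧ T.ξtop ∈ P.ω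

/-- `u`-overlapping trees. -/
def UOverlapping (T : WTree) : Prop := ∀ P ∈ T.carrier, T.ξtop ∈ upperHalf P.ω

/-- `l`-overlapping trees. -/
def LOverlapping (T : WTree) : Prop := ∀ P ∈ T.carrier, T.ξtop ∈ lowerHalf P.ω

/-- `T` is td-maximal among the trees in `Cc` : maximal with respect to inclusion among
trees in `Cc` with the same top data. -/
def TdMaximalAmong (T : WTree) (Cc : Set WTree) : Prop :=
  T ∈ Cc ∧ ∀ T' ∈ Cc, T'.ξtop = T.ξtop → T'.Itop = T.Itop →
    T.carrier ⊆ T'.carrier → T'.carrier ⊆ T.carrier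

/-- Order on the lower tiles of two bitiles. -/
def lowerLE (P Q : Bitile) : Prop := P.I ⊆ Q.I ∧ lowerHalf Q.ω ⊆ lowerHalf P.ω

/-- Strict order on the lower tiles of two bitiles. -/
def lowerLT (P Q : Bitile) : Prop := lowerLE P Q ∧ ¬ lowerLE Q P

/-- `l`-convexity of a set of bitiles. -/
def LConvex (S : Set Bitile) : Prop :=
  ∀ P P' P'' : Bitile, P ∈ S → P'' ∈ S → lowerLT P P' → lowerLT P' P'' → P' ∈ S

/-- A properly-sorted collection of `l`-overlapping trees. -/
def ProperlySorted (Ts : Set WTree) : Prop :=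
  (∀ T ∈ Ts, IsTree T ∧ LOverlapping T ∧ LConvex T.carrier) ∧
  (∀ T ∈ Ts, ∀ T' ∈ Ts, T ≠ T' → T.carrier ∩ T'.carrier = ∅) ∧
  (∀ T ∈ Ts, ∀ P ∈ T.carrier, ∀ T' ∈ Ts, (T'.Itop ∩ P.I).Nonempty → T'.ξtop ∉ upperHalf P.ω)

/-- The multiplier `𝒟_k = Σ_{|ω| = 2^k, ω ∩ Ξ ≠ ∅} a_ω 1_ω`. -/
def Dk (a : Set ℝ → ℝ) (Ξ : Set ℝ) (k : ℤ) (ξ : ℝ) : ℝ :=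
  ∑ᶠ (ω : Set ℝ) (_ : IsDyadicLen k ω ∧ (ω ∩ Ξ).Nonempty),
    a ω * Set.indicator ω (fun _ => (1 : ℝ)) ξ

/-- The sequence `k ↦ Σ_{|ω| = 2^k} a_ω 1_ω(ξ)`. -/
def dyadicSum (a : Set ℝ → ℝ) (ξ : ℝ) (k : ℤ) : ℝ :=
  ∑ᶠ (ω : Set ℝ) (_ : IsDyadicLen k ω), a ω * Set.indicator ω (fun _ => (1 : ℝ)) ξ

/-- A tile `I × ω ⊆ ℝ⁺ × ℝ⁺` : a rectangle of dyadic intervals of area `1`. -/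
structure WTile where
  I : Set ℝ
  ω : Set ℝ
  hI : IsDyadic I
  hω : IsDyadic ω
  hIsub : I ⊆ Set.Ici 0
  hωsub : ω ⊆ Set.Ici 0
  harea : volume I * volume ω = 1

/-- The subset of the phase plane occupied by a tile. -/
def WTile.carrier (p : WTile) : Set (ℝ × ℝ) := p.I ×ˢ p.ω

/-- The phase-plane projection `Π_S` associated to a region `S` which can be written as a
finite disjoint union of tiles (it is independent of the chosen tiling). -/
def phaseProj (S : Set (ℝ × ℝ)) (f : ℝ → ℝ) : ℝ → ℝ :=
  if h : ∃ ps : Set WTile, ps.Finite ∧ ps.PairwiseDisjoint WTile.carrier ∧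
      (⋃ p ∈ ps, p.carrier) = S then
    fun x => ∑ᶠ p ∈ h.choose,
      (∫ y in Set.Ici (0 : ℝ), f y * wavePacket p.I p.ω y) * wavePacket p.I p.ω x
  else 0

/-- The region of the phase plane occupied by a tree. -/
def treeRegion (T : WTree) : Set (ℝ × ℝ) := ⋃ P ∈ T.carrier, P.I ×ˢ P.ω

/-- `size(Ps, f) = sup_{T ⊆ Ps convex tree} |I_T|^{-1/2} ‖Π_T f‖_{L²}`. -/
def size (Ps : Set Bitile) (f : ℝ → ℝ) : ℝ≥0∞ :=
  ⨆ (T : WTree) (_ : IsTree T ∧ ConvexBitiles T.carrier ∧ T.carrier ⊆ Ps),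
    (volume T.Itop ^ (1 / 2 : ℝ))⁻¹ * eLpNorm (phaseProj (treeRegion T) f) 2 μplus


section Helpers

lemma two_zpow_pos' (k : ℤ) : (0:ℝ) < 2 ^ k := zpow_pos (by norm_num) k

lemma ennreal_two_zpow (k : ℤ) : (2 : ℝ≥0∞) ^ k = ENNReal.ofReal ((2:ℝ) ^ k) := by
  have h1 : (((2:ℝ≥0)^k : ℝ≥0) : ℝ) = (2:ℝ)^k := by
    rw [NNReal.coe_zpow]; norm_num
  rw [← h1, ENNReal.ofReal_coe_nnreal, ENNReal.coe_zpow (by norm_num : (2:ℝ≥0) ≠ 0)]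
  norm_num

def dIco (n k : ℤ) : Set ℝ := Set.Ico ((n:ℝ) * 2 ^ k) (((n:ℝ) + 1) * 2 ^ k)

lemma volume_dIco (n k : ℤ) : volume (dIco n k) = ENNReal.ofReal ((2:ℝ)^k) := by
  rw [dIco, Real.volume_Ico]; congr 1; ring

lemma dIco_subset {m k' n k : ℤ} (hkk : k' ≤ k) {x : ℝ}
    (hm : x ∈ dIco m k') (hn : x ∈ dIco n k) : dIco m k' ⊆ dIco n k := by
  obtain ⟨hm1, hm2⟩ := hm
  obtain ⟨hn1, hn2⟩ := hn
  have hp' : (0:ℝ) < 2 ^ k' := two_zpow_pos' k'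
  set D : ℤ := 2 ^ (k - k').toNat with hD
  have h2k : (2:ℝ) ^ k = (D : ℝ) * 2 ^ k' := by
    rw [hD]
    push_cast
    rw [← zpow_natCast (2:ℝ) (k-k').toNat, ← zpow_add₀ (by norm_num : (2:ℝ) ≠ 0)]
    congr 1
    omega
  have hint1 : n * D ≤ m := by
    have h' : (n:ℝ) * ((D:ℝ) * 2 ^ k') < ((m:ℝ) + 1) * 2 ^ k' := by
      rw [← h2k]; exact lt_of_le_of_lt hn1 hm2
    have h : ((n * D : ℤ) : ℝ) < ((m + 1 : ℤ) : ℝ) := by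
      push_cast
      nlinarith
    have : n * D < m + 1 := by exact_mod_cast h
    omega
  have hint2 : m + 1 ≤ (n + 1) * D := by
    have h' : (m:ℝ) * 2 ^ k' < ((n:ℝ) + 1) * ((D:ℝ) * 2 ^ k') := by
      rw [← h2k]; exact lt_of_le_of_lt hm1 hn2
    have h : ((m : ℤ) : ℝ) < (((n + 1) * D : ℤ) : ℝ) := by
      push_cast
      nlinarith
    have : m < (n + 1) * D := by exact_mod_cast h
    omega
  intro y hy
  obtain ⟨hy1, hy2⟩ := hy
  constructor
  · calc (n:ℝ) * 2 ^ k = ((n * D : ℤ) : ℝ) * 2 ^ k' := by rw [h2k]; push_cast; ring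
      _ ≤ (m:ℝ) * 2 ^ k' := by
          apply mul_le_mul_of_nonneg_right _ hp'.le
          exact_mod_cast hint1
      _ ≤ y := hy1
  · calc y < ((m:ℝ) + 1) * 2 ^ k' := hy2
      _ ≤ (((n + 1) * D : ℤ) : ℝ) * 2 ^ k' := by
          apply mul_le_mul_of_nonneg_right _ hp'.le
          push_cast
          exact_mod_cast hint2
      _ = ((n:ℝ) + 1) * 2 ^ k := by rw [h2k]; push_cast; ring

lemma dIco_eq {m n k : ℤ} {x : ℝ} (hm : x ∈ dIco m k) (hn : x ∈ dIco n k) :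
    dIco m k = dIco n k :=
  subset_antisymm (dIco_subset le_rfl hm hn) (dIco_subset le_rfl hn hm)

lemma dIco_inj {m k n l : ℤ} (h : dIco m k = dIco n l) : m = n ∧ k = l := by
  have hmm : ∀ a b : ℤ, (a:ℝ) * 2 ^ b < ((a:ℝ) + 1) * 2 ^ b := fun a b => by
    have := two_zpow_pos' b; nlinarith
  have h1 : (m:ℝ) * 2 ^ k = (n:ℝ) * 2 ^ l := by
    have e1 := congrArg sInf h
    rwa [dIco, dIco, csInf_Ico (hmm m k), csInf_Ico (hmm n l)] at e1
  have h2 : ((m:ℝ) + 1) * 2 ^ k = ((n:ℝ) + 1) * 2 ^ l := by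
    have e2 := congrArg sSup h
    rwa [dIco, dIco, csSup_Ico (hmm m k), csSup_Ico (hmm n l)] at e2
  have h3 : (2:ℝ) ^ k = 2 ^ l := by nlinarith
  have hk : k = l := zpow_right_injective₀ (by norm_num) (by norm_num) h3
  subst hk
  have hmn : (m:ℝ) = n := mul_right_cancel₀ (two_zpow_pos' k).ne' h1
  exact ⟨by exact_mod_cast hmn, rfl⟩

lemma half_eqs (m k : ℤ) :
    lowerHalf (dIco m k) = dIco (2*m) (k-1) ∧ upperHalf (dIco m k) = dIco (2*m+1) (k-1) := by
  have h2 : (2:ℝ) ^ k = 2 ^ (k-1) * 2 := by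
    rw [← zpow_add_one₀ (by norm_num : (2:ℝ) ≠ 0)]
    congr 1
    omega
  have hp := two_zpow_pos' (k-1)
  have hab : (m:ℝ) * 2 ^ k < ((m:ℝ) + 1) * 2 ^ k := by nlinarith [two_zpow_pos' k]
  have hc : (sInf (dIco m k) + sSup (dIco m k)) / 2 = ((2*m+1 : ℤ) : ℝ) * 2 ^ (k-1) := by
    rw [dIco, csInf_Ico hab, csSup_Ico hab, h2]
    push_cast
    ring
  constructor
  · rw [lowerHalf, hc]
    ext y
    simp only [dIco, Set.mem_inter_iff, Set.mem_Ico, Set.mem_Iio]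
    push_cast
    rw [h2]
    constructor
    · rintro ⟨⟨hy1, _⟩, hy3⟩
      constructor
      · nlinarith
      · nlinarith
    · rintro ⟨hy1, hy2⟩
      refine ⟨⟨by nlinarith, by nlinarith⟩, by nlinarith⟩
  · rw [upperHalf, hc]
    ext y
    simp only [dIco, Set.mem_inter_iff, Set.mem_Ico, Set.mem_Ici]
    push_cast
    rw [h2]
    constructor
    · rintro ⟨⟨_, hy2⟩, hy3⟩
      constructor
      · nlinarith
      · nlinarith
    · rintro ⟨hy1, hy2⟩
      refine ⟨⟨by nlinarith, by nlinarith⟩, by nlinarith⟩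

lemma lowerHalf_subset' (ω : Set ℝ) : lowerHalf ω ⊆ ω := Set.inter_subset_left

lemma upperHalf_subset' (ω : Set ℝ) : upperHalf ω ⊆ ω := Set.inter_subset_left

lemma lt_of_halves {ω : Set ℝ} {a b : ℝ} (ha : a ∈ lowerHalf ω) (hb : b ∈ upperHalf ω) :
    a < b := lt_of_lt_of_le ha.2 hb.2

lemma lower_upper_false {ω : Set ℝ} {a : ℝ} (ha : a ∈ lowerHalf ω) (hb : a ∈ upperHalf ω) :
    False := lt_irrefl a (lt_of_halves ha hb)

end Helpers

section BitileHelpers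

lemma Bitile.params (P : Bitile) : ∃ s n m : ℤ, P.I = dIco n s ∧ P.ω = dIco m (1 - s) := by
  obtain ⟨n, s, hI⟩ := P.hI
  obtain ⟨m, l, hω⟩ := P.hω
  have hI' : P.I = dIco n s := hI
  have hω' : P.ω = dIco m l := hω
  refine ⟨s, n, m, hI', ?_⟩
  have hv : ENNReal.ofReal ((2:ℝ)^s) * ENNReal.ofReal ((2:ℝ)^l) = 2 := by
    rw [← volume_dIco n s, ← volume_dIco m l, ← hI', ← hω']
    exact P.harea
  rw [← ENNReal.ofReal_mul (two_zpow_pos' s).le,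
    ← zpow_add₀ (by norm_num : (2:ℝ) ≠ 0)] at hv
  have h2 : ENNReal.ofReal ((2:ℝ) ^ (s + l)) = ENNReal.ofReal ((2:ℝ) ^ (1:ℤ)) := by
    rw [hv]; norm_num
  have h3 : (2:ℝ) ^ (s + l) = (2:ℝ) ^ (1:ℤ) :=
    (ENNReal.ofReal_eq_ofReal_iff (two_zpow_pos' _).le (two_zpow_pos' _).le).mp h2
  have h4 : s + l = 1 := zpow_right_injective₀ (by norm_num) (by norm_num) h3
  have : l = 1 - s := by omega
  rwa [this] at hω'

noncomputable def Bsc (P : Bitile) : ℤ := P.params.choose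
noncomputable def Bni (P : Bitile) : ℤ := P.params.choose_spec.choose
noncomputable def Bmi (P : Bitile) : ℤ := P.params.choose_spec.choose_spec.choose

lemma BI (P : Bitile) : P.I = dIco (Bni P) (Bsc P) :=
  P.params.choose_spec.choose_spec.choose_spec.1

lemma Bω (P : Bitile) : P.ω = dIco (Bmi P) (1 - Bsc P) :=
  P.params.choose_spec.choose_spec.choose_spec.2

lemma Bωu (P : Bitile) : upperHalf P.ω = dIco (2 * Bmi P + 1) (- Bsc P) := by
  have he : (1 - Bsc P) - 1 = -Bsc P := by omega
  rw [Bω, (half_eqs _ _).2, he]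

lemma Bωl (P : Bitile) : lowerHalf P.ω = dIco (2 * Bmi P) (- Bsc P) := by
  have he : (1 - Bsc P) - 1 = -Bsc P := by omega
  rw [Bω, (half_eqs _ _).1, he]

lemma Bvol (P : Bitile) : volume P.I = ENNReal.ofReal ((2:ℝ) ^ Bsc P) := by
  rw [BI, volume_dIco]

lemma Bvol_lt_iff (P : Bitile) (k : ℤ) : volume P.I < 2 ^ k ↔ Bsc P < k := by
  rw [Bvol, ennreal_two_zpow, ENNReal.ofReal_lt_ofReal_iff (two_zpow_pos' k),
    zpow_lt_zpow_iff_right₀ (by norm_num : (1:ℝ) < 2)]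

lemma Bitile.ext' {P Q : Bitile} (h1 : P.I = Q.I) (h2 : P.ω = Q.ω) : P = Q := by
  cases P; cases Q
  simp only at h1 h2
  subst h1; subst h2
  rfl

lemma tile_unique {P Q : Bitile} {x ξ : ℝ} (hxP : x ∈ P.I) (hxQ : x ∈ Q.I)
    (hξP : ξ ∈ upperHalf P.ω) (hξQ : ξ ∈ upperHalf Q.ω) (hs : Bsc P = Bsc Q) : P = Q := by
  have h1 : x ∈ dIco (Bni P) (Bsc P) := BI P ▸ hxP
  have h2 : x ∈ dIco (Bni Q) (Bsc P) := by rw [hs]; exact BI Q ▸ hxQ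
  have hI : P.I = Q.I := by rw [BI P, BI Q, ← hs]; exact dIco_eq h1 h2
  have h3 : ξ ∈ dIco (2 * Bmi P + 1) (-(Bsc P)) := Bωu P ▸ hξP
  have h4 : ξ ∈ dIco (2 * Bmi Q + 1) (-(Bsc P)) := by rw [hs]; exact Bωu Q ▸ hξQ
  have hmi : Bmi P = Bmi Q := by
    have := (dIco_inj (dIco_eq h3 h4)).1
    omega
  have hω : P.ω = Q.ω := by rw [Bω P, Bω Q, hmi, hs]
  exact Bitile.ext' hI hω

lemma omega_nest {P Q : Bitile} {η : ℝ} (hP : η ∈ upperHalf P.ω) (hQ : η ∈ Q.ω)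
    (hs : Bsc P < Bsc Q) : Q.ω ⊆ upperHalf P.ω := by
  rw [Bωu] at hP ⊢
  rw [Bω] at hQ ⊢
  exact dIco_subset (by omega) hQ hP

lemma omega_nest_lower {P Q : Bitile} {η : ℝ} (hP : η ∈ P.ω) (hQ : η ∈ lowerHalf Q.ω)
    (hs : Bsc Q < Bsc P) : P.ω ⊆ lowerHalf Q.ω := by
  rw [Bω] at hP ⊢
  rw [Bωl] at hQ ⊢
  exact dIco_subset (by omega) hP hQ

lemma I_nest {P Q : Bitile} {x : ℝ} (hP : x ∈ P.I) (hQ : x ∈ Q.I) (hs : Bsc P ≤ Bsc Q) :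
    P.I ⊆ Q.I := by
  rw [BI P] at hP ⊢
  rw [BI Q] at hQ ⊢
  exact dIco_subset hs hP hQ

lemma left_endpoint_mem_lower (P : Bitile) :
    (Bmi P : ℝ) * 2 ^ (1 - Bsc P) ∈ lowerHalf P.ω := by
  rw [Bωl]
  have h2 : (2:ℝ) ^ (1 - Bsc P) = 2 ^ (-(Bsc P)) * 2 := by
    rw [← zpow_add_one₀ (by norm_num : (2:ℝ) ≠ 0)]
    congr 1
    omega
  have hp := two_zpow_pos' (-(Bsc P))
  constructor
  · push_cast
    rw [h2]
    nlinarith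
  · push_cast
    rw [h2]
    nlinarith

end BitileHelpers

section VnormHelpers

lemma exists_strict_refine {D : Set ℝ} (f : ℝ → ℝ) (r : ℝ) (hr : 0 < r)
    (N : ℕ) (g : Fin (N+1) → ℝ) (hmono : Monotone g) (hmem : ∀ i, g i ∈ D) :
    ∃ (M : ℕ) (v : Fin (M+1) → ℝ), StrictMono v ∧ (∀ i, v i ∈ D) ∧
      (∑ i : Fin N, (‖f (g i.succ) - f (g i.castSucc)‖₊ : ℝ≥0∞) ^ r) ≤
        ∑ i : Fin M, (‖f (v i.succ) - f (v i.castSucc)‖₊ : ℝ≥0∞) ^ r := by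
  classical
  set A : Finset ℝ := Finset.image g Finset.univ with hA
  have hAne : A.Nonempty := ⟨g 0, Finset.mem_image_of_mem g (Finset.mem_univ 0)⟩
  obtain ⟨M, hM⟩ : ∃ M, A.card = M + 1 :=
    ⟨A.card - 1, (Nat.succ_pred_eq_of_pos hAne.card_pos).symm⟩
  set e := A.orderIsoOfFin hM with he
  set v : Fin (M+1) → ℝ := fun j => (e j : ℝ) with hv
  have hvmono : StrictMono v := fun a b hab => Subtype.coe_lt_coe.mpr (e.strictMono hab)
  have hvmem : ∀ j, v j ∈ D := by
    intro j
    obtain ⟨i, _, hi⟩ := Finset.mem_image.mp (e j).2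
    have : v j = g i := hi.symm
    rw [this]
    exact hmem i
  refine ⟨M, v, hvmono, hvmem, ?_⟩
  set t : Fin N → ℝ≥0∞ := fun i => (‖f (g i.succ) - f (g i.castSucc)‖₊ : ℝ≥0∞) ^ r with ht
  set s : Fin M → ℝ≥0∞ := fun j => (‖f (v j.succ) - f (v j.castSucc)‖₊ : ℝ≥0∞) ^ r with hs
  set s' : ℕ → ℝ≥0∞ := fun n => if h : n < M then s ⟨n, h⟩ else 0 with hs'
  have hgmem : ∀ i : Fin (N+1), g i ∈ A := fun i => Finset.mem_image_of_mem g (Finset.mem_univ i)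
  set idx : Fin (N+1) → Fin (M+1) := fun i => e.symm ⟨g i, hgmem i⟩ with hidx
  have hvidx : ∀ i, v (idx i) = g i := by
    intro i
    rw [hv, hidx]
    simp
  have hidxlt : ∀ {i i' : Fin (N+1)}, g i < g i' → idx i < idx i' := by
    intro i i' hlt
    have h1 : v (idx i) < v (idx i') := by rw [hvidx, hvidx]; exact hlt
    exact hvmono.lt_iff_lt.mp h1
  have hkey : ∀ i : Fin N, g i.castSucc < g i.succ →
      (idx i.castSucc).val + 1 ≤ M ∧ (idx i.succ).val = (idx i.castSucc).val + 1 := by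
    intro i hlt
    have h1 : idx i.castSucc < idx i.succ := hidxlt hlt
    have h1' : (idx i.castSucc).val + 1 ≤ (idx i.succ).val := h1
    have h2 : (idx i.succ).val ≤ M := Nat.lt_succ_iff.mp (idx i.succ).isLt
    refine ⟨le_trans h1' h2, ?_⟩
    by_contra hne
    have h3 : (idx i.castSucc).val + 1 < (idx i.succ).val := by omega
    set j : Fin (M+1) := ⟨(idx i.castSucc).val + 1, by omega⟩ with hj
    have hj1 : v (idx i.castSucc) < v j := hvmono (show ((idx i.castSucc : Fin (M+1)) : ℕ) < (j : ℕ) by simp [hj])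
    have hj2 : v j < v (idx i.succ) := hvmono (show ((j : Fin (M+1)) : ℕ) < ((idx i.succ : Fin (M+1)) : ℕ) by simp [hj]; omega)
    rw [hvidx] at hj1 hj2
    obtain ⟨i'', _, hi''⟩ := Finset.mem_image.mp (e j).2
    have hvj : v j = g i'' := hi''.symm
    rw [hvj] at hj1 hj2
    rcases le_or_gt i'' i.castSucc with hle | hgt
    · exact absurd (hmono hle) (not_le.mpr hj1)
    · have hge : i.succ ≤ i'' := by
        have hval : ((i.castSucc : Fin (N+1)) : ℕ) < (i'' : ℕ) := hgt
        rw [Fin.le_def]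
        simp only [Fin.coe_castSucc, Fin.val_succ] at hval ⊢
        omega
      exact absurd (hmono hge) (not_le.mpr hj2)
  set supp : Finset (Fin N) := Finset.univ.filter (fun i => g i.castSucc < g i.succ) with hsupp
  have hzero : ∀ i ∈ Finset.univ, i ∉ supp → t i = 0 := by
    intro i _ hi
    have hle : g i.castSucc ≤ g i.succ := hmono (Fin.castSucc_lt_succ : i.castSucc < i.succ).le
    have heq : g i.castSucc = g i.succ := by
      rcases eq_or_lt_of_le hle with h | h
      · exact h
      · exact absurd (Finset.mem_filter.mpr ⟨Finset.mem_univ i, h⟩) hi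
    rw [ht]
    simp only [heq, sub_self, nnnorm_zero, ENNReal.coe_zero]
    exact ENNReal.zero_rpow_of_pos hr
  have hteq : ∀ i ∈ supp, t i = s' ((idx i.castSucc).val) := by
    intro i hi
    have hlt : g i.castSucc < g i.succ := (Finset.mem_filter.mp hi).2
    obtain ⟨hle, heq⟩ := hkey i hlt
    have hM' : (idx i.castSucc).val < M := by omega
    have h1 : v (Fin.castSucc ⟨(idx i.castSucc).val, hM'⟩) = g i.castSucc := by
      have hfe : (Fin.castSucc ⟨(idx i.castSucc).val, hM'⟩ : Fin (M+1)) = idx i.castSucc :=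
        Fin.ext (by simp)
      rw [hfe, hvidx]
    have h2 : v (Fin.succ ⟨(idx i.castSucc).val, hM'⟩) = g i.succ := by
      have hfe : (Fin.succ ⟨(idx i.castSucc).val, hM'⟩ : Fin (M+1)) = idx i.succ :=
        Fin.ext (by simp [heq])
      rw [hfe, hvidx]
    have hs'eq : s' ((idx i.castSucc).val) = s ⟨(idx i.castSucc).val, hM'⟩ := by
      simp only [hs']
      rw [dif_pos hM']
    rw [hs'eq]
    simp only [hs, ht]
    rw [h1, h2]
  have hinj : ∀ i ∈ supp, ∀ i' ∈ supp,
      (idx i.castSucc).val = (idx i'.castSucc).val → i = i' := by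
    intro i hi i' hi' hval
    have hlt : g i.castSucc < g i.succ := (Finset.mem_filter.mp hi).2
    have hlt' : g i'.castSucc < g i'.succ := (Finset.mem_filter.mp hi').2
    have hgg : g i.castSucc = g i'.castSucc := by
      have : idx i.castSucc = idx i'.castSucc := Fin.ext hval
      rw [← hvidx i.castSucc, ← hvidx i'.castSucc, this]
    by_contra hne
    rcases lt_or_gt_of_ne hne with h | h
    · have hss : i.succ ≤ i'.castSucc := by
        have hval : (i : ℕ) < (i' : ℕ) := h
        rw [Fin.le_def]
        simp only [Fin.val_succ, Fin.coe_castSucc]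
        omega
      have := hmono hss
      rw [← hgg] at this
      exact absurd this (not_le.mpr hlt)
    · have hss : i'.succ ≤ i.castSucc := by
        have hval : (i' : ℕ) < (i : ℕ) := h
        rw [Fin.le_def]
        simp only [Fin.val_succ, Fin.coe_castSucc]
        omega
      have := hmono hss
      rw [hgg] at this
      exact absurd this (not_le.mpr hlt')
  calc ∑ i : Fin N, t i = ∑ i ∈ supp, t i :=
        (Finset.sum_subset (Finset.subset_univ supp) hzero).symm
    _ = ∑ i ∈ supp, s' ((idx i.castSucc).val) := Finset.sum_congr rfl hteq
    _ = ∑ n ∈ supp.image (fun i => (idx i.castSucc).val), s' n :=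
        (Finset.sum_image hinj).symm
    _ ≤ ∑ n ∈ Finset.range M, s' n := by
        apply Finset.sum_le_sum_of_subset
        intro n hn
        obtain ⟨i, hi, hin⟩ := Finset.mem_image.mp hn
        have hlt : g i.castSucc < g i.succ := (Finset.mem_filter.mp hi).2
        have := (hkey i hlt).1
        rw [Finset.mem_range]
        omega
    _ = ∑ j : Fin M, s j := by
        rw [← Fin.sum_univ_eq_sum_range s' M]
        apply Finset.sum_congr rfl
        intro j _
        have hfj : (⟨(j:ℕ), j.isLt⟩ : Fin M) = j := Fin.ext rfl
        simp only [hs', dif_pos j.isLt, hfj]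

lemma vnorm_comp_monotone {r : ℝ} (hr : 0 < r) {D : Set ℝ} (f : ℝ → ℝ) (η : ℤ → ℝ)
    (hmono : Monotone η) (hmem : ∀ k, η k ∈ D) :
    vnorm r (Set.univ : Set ℤ) (fun k => f (η k)) ≤ vnorm r D f := by
  refine add_le_add ?_ ?_
  · refine iSup₂_le fun k _ => ?_
    exact le_iSup₂ (f := fun ξ (_ : ξ ∈ D) => (‖f ξ‖₊ : ℝ≥0∞)) (η k) (hmem k)
  · refine iSup_le fun N => iSup_le fun u => iSup_le fun hu => iSup_le fun _ => ?_
    obtain ⟨M, v, hv, hvD, hsum⟩ := exists_strict_refine f r hr N (fun i => η (u i))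
      (fun a b hab => hmono (hu.monotone hab)) (fun i => hmem (u i))
    refine le_trans (ENNReal.rpow_le_rpow hsum (by positivity)) ?_
    exact le_iSup_of_le M (le_iSup_of_le v (le_iSup_of_le hv (le_iSup_of_le hvD le_rfl)))

lemma vnorm_zero_fun {ι : Type*} [LinearOrder ι] {r : ℝ} (hr : 0 < r) {D : Set ι}
    {m : ι → ℝ} (hm : ∀ i, m i = 0) : vnorm r D m = 0 := by
  apply le_antisymm _ zero_le
  rw [vnorm, ← add_zero (0:ℝ≥0∞)]
  refine add_le_add (iSup₂_le fun i _ => by simp [hm i]) ?_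
  refine iSup_le fun N => iSup_le fun u => iSup_le fun _ => iSup_le fun _ => ?_
  have hterm : ∀ i : Fin N, (‖m (u i.succ) - m (u i.castSucc)‖₊ : ℝ≥0∞) ^ r = 0 := by
    intro i
    simp only [hm, sub_self, nnnorm_zero, ENNReal.coe_zero]
    exact ENNReal.zero_rpow_of_pos hr
  rw [Finset.sum_congr rfl (fun i _ => hterm i), Finset.sum_const, smul_zero]
  rw [ENNReal.zero_rpow_of_pos (by positivity)]

end VnormHelpers

set_option maxHeartbeats 1600000

/-- Corollary 6.4: for a stack of trees as in Lemma 6.1 and any coefficients `c_P`,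
`sup_ξ ‖(Σ_{P ∈ Ps, |I_P| < 2^k} c_P 1_{ω_{P_u}}(ξ))_k‖_{V^r_k}
  ≤ C sup_{T ∈ Ts} ‖Σ_{P ∈ T} c_P 1_{ω_{P_u}}‖_{V^r}`. -/
theorem stack_vartrunc : ∃ C : ℝ, 0 < C ∧ ∀ r : ℝ, 1 ≤ r →
    ∀ x : ℝ, 0 ≤ x → ∀ Ps : Set Bitile, Ps.Finite → (∀ P ∈ Ps, x ∈ P.I) →
    ∀ Ts : Set WTree, Ts.Finite → Ps = (⋃ T ∈ Ts, T.carrier) →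
    ((∀ T ∈ Ts, IsTree T ∧ UOverlapping T ∧
        TdMaximalAmong T {T' | IsTree T' ∧ UOverlapping T' ∧ T'.carrier ⊆ Ps}) ∨
      ProperlySorted Ts) →
    ∀ c : Bitile → ℝ,
      (⨆ (ξ : ℝ) (_ : ξ ∈ Set.Ici (0 : ℝ)), vnorm r (Set.univ : Set ℤ) fun k =>
          ∑ᶠ (P : Bitile) (_ : P ∈ Ps ∧ volume P.I < 2 ^ k),
            c P * Set.indicator (upperHalf P.ω) (fun _ => (1 : ℝ)) ξ) ≤
        ENNReal.ofReal C *
          ⨆ T ∈ Ts, vnorm r (Set.Ici 0) (fun ξ =>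
            ∑ᶠ P ∈ T.carrier, c P * Set.indicator (upperHalf P.ω) (fun _ => (1 : ℝ)) ξ) := by
  classical
  refine ⟨1, one_pos, ?_⟩
  intro r hr x hx Ps hPsfin hxI Ts hTsfin hcup hcase c
  have hr0 : (0:ℝ) < r := lt_of_lt_of_le one_pos hr
  rw [ENNReal.ofReal_one, one_mul]
  refine iSup₂_le fun ξ hξ => ?_
  set F : Finset Bitile := hPsfin.toFinset.filter (fun P => ξ ∈ upperHalf P.ω) with hFd
  have hFmem : ∀ {P : Bitile}, P ∈ F ↔ P ∈ Ps ∧ ξ ∈ upperHalf P.ω := by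
    intro P
    rw [hFd, Finset.mem_filter, Set.Finite.mem_toFinset]
  have hPsmem : ∀ {P : Bitile} {T : WTree}, T ∈ Ts → P ∈ T.carrier → P ∈ Ps := by
    intro P T hT hP
    rw [hcup]
    exact Set.mem_iUnion₂.mpr ⟨T, hT, hP⟩
  have htree_of : ∀ P : Bitile, P ∈ Ps → ∃ T ∈ Ts, P ∈ T.carrier := by
    intro P hP
    rw [hcup] at hP
    simpa using Set.mem_iUnion₂.mp hP
  -- LHS evaluation
  have hLHS : ∀ k : ℤ, (∑ᶠ (P : Bitile) (_ : P ∈ Ps ∧ volume P.I < 2 ^ k),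
      c P * Set.indicator (upperHalf P.ω) (fun _ => (1:ℝ)) ξ) =
      ∑ P ∈ F.filter (fun P => Bsc P < k), c P := by
    intro k
    rw [finsum_cond_eq_sum_of_cond_iff _ ?_]
    · apply Finset.sum_congr rfl
      intro P hP
      have hm : ξ ∈ upperHalf P.ω := (hFmem.mp (Finset.mem_filter.mp hP).1).2
      rw [Set.indicator_of_mem hm, mul_one]
    · intro P hne
      have hind : ξ ∈ upperHalf P.ω := by
        by_contra hno
        rw [Set.indicator_of_notMem hno, mul_zero] at hne
        exact hne rfl
      constructor
      · rintro ⟨h1, h2⟩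
        exact Finset.mem_filter.mpr ⟨hFmem.mpr ⟨h1, hind⟩, (Bvol_lt_iff P k).mp h2⟩
      · intro hP
        obtain ⟨h1, h2⟩ := Finset.mem_filter.mp hP
        exact ⟨(hFmem.mp h1).1, (Bvol_lt_iff P k).mpr h2⟩
  rcases Finset.eq_empty_or_nonempty F with hFe | hFne
  · -- trivial case: no tile contributes at ξ
    have hz : ∀ k : ℤ, (∑ᶠ (P : Bitile) (_ : P ∈ Ps ∧ volume P.I < 2 ^ k),
        c P * Set.indicator (upperHalf P.ω) (fun _ => (1:ℝ)) ξ) = 0 := by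
      intro k
      rw [hLHS k, hFe]
      simp
    exact le_trans (le_of_eq (vnorm_zero_fun hr0 hz)) zero_le
  · -- main case
    have key : ∃ T, T ∈ Ts ∧ ∃ η : ℤ → ℝ, Monotone η ∧ (∀ k, η k ∈ Set.Ici (0:ℝ)) ∧
        ∀ (k : ℤ) (P : Bitile),
          (P ∈ T.carrier ∧ η k ∈ upperHalf P.ω) ↔ (P ∈ F ∧ Bsc P < k) := by
      rcases hcase with hu | hl
      · -- u-overlapping, td-maximal case
        set J : Finset ℤ := F.image Bsc with hJd
        have hJne : J.Nonempty := hFne.image Bsc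
        set jmax : ℤ := J.max' hJne with hjmaxd
        have hscle : ∀ P ∈ F, Bsc P ≤ jmax := fun P hP =>
          J.le_max' _ (Finset.mem_image_of_mem Bsc hP)
        set PP : ℤ → Bitile :=
          fun j => if h : ∃ P, P ∈ F ∧ Bsc P = j then h.choose else hFne.choose with hPPd
        have hPPspec : ∀ j ∈ J, PP j ∈ F ∧ Bsc (PP j) = j := by
          intro j hj
          obtain ⟨P, hP, hPe⟩ := Finset.mem_image.mp hj
          have hex : ∃ P, P ∈ F ∧ Bsc P = j := ⟨P, hP, hPe⟩
          simp only [hPPd]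
          rw [dif_pos hex]
          exact hex.choose_spec
        have hjk : ∀ k : ℤ, k ≤ jmax → (J.filter (fun j => k ≤ j)).Nonempty :=
          fun k hk => ⟨jmax, Finset.mem_filter.mpr ⟨J.max'_mem hJne, hk⟩⟩
        set jstar : ℤ → ℤ := fun k =>
          if h : k ≤ jmax then (J.filter (fun j => k ≤ j)).min' (hjk k h) else jmax with hjstard
        have hjstar_spec : ∀ k : ℤ, k ≤ jmax →
            jstar k ∈ J ∧ k ≤ jstar k ∧ ∀ j ∈ J, k ≤ j → jstar k ≤ j := by
          intro k hk
          have he : jstar k = (J.filter (fun j => k ≤ j)).min' (hjk k hk) := by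
            simp only [hjstard]
            rw [dif_pos hk]
          have h1 := Finset.min'_mem (J.filter (fun j => k ≤ j)) (hjk k hk)
          rw [← he, Finset.mem_filter] at h1
          refine ⟨h1.1, h1.2, fun j hj hkj => ?_⟩
          rw [he]
          exact Finset.min'_le _ j (Finset.mem_filter.mpr ⟨hj, hkj⟩)
        -- the tree containing the maximal tile
        set Pmx : Bitile := PP jmax with hPmxd
        have hPmxF : Pmx ∈ F ∧ Bsc Pmx = jmax := hPPspec jmax (J.max'_mem hJne)
        obtain ⟨T, hTmem, hPmxT⟩ := htree_of Pmx (hFmem.mp hPmxF.1).1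
        obtain ⟨hTtree, hTu, hTmax⟩ := hu T hTmem
        -- every chain tile lies in T
        have hub : ∀ Q ∈ F, T.ξtop ∈ upperHalf Q.ω := by
          intro Q hQ
          rcases eq_or_lt_of_le (hscle Q hQ) with heq | hlt
          · have hQP : Q = Pmx := tile_unique (hxI Q (hFmem.mp hQ).1) (hxI Pmx (hFmem.mp hPmxF.1).1)
              (hFmem.mp hQ).2 (hFmem.mp hPmxF.1).2 (heq.trans hPmxF.2.symm)
            rw [hQP]
            exact hTu Pmx hPmxT
          · have hsub : Pmx.ω ⊆ upperHalf Q.ω :=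
              omega_nest (hFmem.mp hQ).2 (upperHalf_subset' _ (hFmem.mp hPmxF.1).2)
                (by rw [hPmxF.2]; exact hlt)
            exact hsub (upperHalf_subset' _ (hTu Pmx hPmxT))
        have hFT : ∀ Q ∈ F, Q ∈ T.carrier := by
          intro Q hQ
          set T' : WTree := ⟨T.carrier ∪ ↑F, T.ξtop, T.Itop⟩ with hT'd
          have hIsub : ∀ Q' ∈ F, Q'.I ⊆ T.Itop := by
            intro Q' hQ'
            have h1 : Q'.I ⊆ Pmx.I := I_nest (hxI Q' (hFmem.mp hQ').1)
              (hxI Pmx (hFmem.mp hPmxF.1).1) (by rw [hPmxF.2]; exact hscle Q' hQ')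
            exact h1.trans (hTtree.2.2 Pmx hPmxT).1
          have hT'tree : IsTree T' := by
            refine ⟨hTtree.1, hTtree.2.1, ?_⟩
            intro P' hP'
            rcases hP' with h | h
            · exact hTtree.2.2 P' h
            · have hQ'F : P' ∈ F := by exact_mod_cast h
              exact ⟨hIsub P' hQ'F, upperHalf_subset' _ (hub P' hQ'F)⟩
          have hT'u : UOverlapping T' := by
            intro P' hP'
            rcases hP' with h | h
            · exact hTu P' h
            · exact hub P' (by exact_mod_cast h)
          have hT'sub : T'.carrier ⊆ Ps := by
            intro P' hP'
            rcases hP' with h | h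
            · exact hPsmem hTmem h
            · exact (hFmem.mp (by exact_mod_cast h)).1
          have hcont := hTmax.2 T' ⟨hT'tree, hT'u, hT'sub⟩ rfl rfl Set.subset_union_left
          exact hcont (Set.mem_union_right _ (by exact_mod_cast hQ))
        -- the reparametrization
        set η : ℤ → ℝ := fun k =>
          if hk : k ≤ jmax then (Bmi (PP (jstar k)) : ℝ) * 2 ^ (1 - Bsc (PP (jstar k)))
          else ξ with hηd
        have hηlow : ∀ k : ℤ, k ≤ jmax → η k ∈ lowerHalf (PP (jstar k)).ω := by
          intro k hk
          have he : η k = (Bmi (PP (jstar k)) : ℝ) * 2 ^ (1 - Bsc (PP (jstar k))) := by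
            simp only [hηd]
            rw [dif_pos hk]
          rw [he]
          exact left_endpoint_mem_lower _
        have hηtop : ∀ k : ℤ, ¬(k ≤ jmax) → η k = ξ := by
          intro k hk
          simp only [hηd]
          rw [dif_neg hk]
        refine ⟨T, hTmem, η, ?_, ?_, ?_⟩
        · -- monotone
          intro k k' hkk
          by_cases hk' : k' ≤ jmax
          · have hk : k ≤ jmax := le_trans hkk hk'
            obtain ⟨hj1J, hj1k, hj1min⟩ := hjstar_spec k hk
            obtain ⟨hj2J, hj2k, _⟩ := hjstar_spec k' hk'
            have hjle : jstar k ≤ jstar k' := hj1min _ hj2J (le_trans hkk hj2k)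
            rcases eq_or_lt_of_le hjle with heq | hlt
            · have he : η k = η k' := by
                simp only [hηd]
                rw [dif_pos hk, dif_pos hk', heq]
              exact he.le
            · have hQ1 := hPPspec _ hj1J
              have hQ2 := hPPspec _ hj2J
              have hsub : (PP (jstar k')).ω ⊆ upperHalf (PP (jstar k)).ω :=
                omega_nest (hFmem.mp hQ1.1).2 (upperHalf_subset' _ (hFmem.mp hQ2.1).2)
                  (by rw [hQ1.2, hQ2.2]; exact hlt)
              exact (lt_of_halves (hηlow k hk)
                (hsub (lowerHalf_subset' _ (hηlow k' hk')))).le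
          · rw [hηtop k' hk']
            by_cases hk : k ≤ jmax
            · have hQ1 := hPPspec _ (hjstar_spec k hk).1
              exact (lt_of_halves (hηlow k hk) (hFmem.mp hQ1.1).2).le
            · rw [hηtop k hk]
        · -- nonneg
          intro k
          by_cases hk : k ≤ jmax
          · exact (PP (jstar k)).hωsub (lowerHalf_subset' _ (hηlow k hk))
          · rw [hηtop k hk]
            exact hξ
        · -- the key filter identity
          intro k P
          by_cases hk : k ≤ jmax
          · obtain ⟨hjJ, hjk, hjmin⟩ := hjstar_spec k hk
            have hQ := hPPspec _ hjJ
            have hηk : η k ∈ lowerHalf (PP (jstar k)).ω := hηlow k hk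
            have hξQ : ξ ∈ upperHalf (PP (jstar k)).ω := (hFmem.mp hQ.1).2
            constructor
            · rintro ⟨hPT, hηu⟩
              have hPPs : P ∈ Ps := hPsmem hTmem hPT
              rcases lt_trichotomy (Bsc P) (jstar k) with hlt | heq | hgt
              · have hsub : (PP (jstar k)).ω ⊆ upperHalf P.ω :=
                  omega_nest hηu (lowerHalf_subset' _ hηk) (by rw [hQ.2]; exact hlt)
                have hPF : P ∈ F := hFmem.mpr ⟨hPPs, hsub (upperHalf_subset' _ hξQ)⟩
                refine ⟨hPF, ?_⟩
                by_contra hnk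
                push_neg at hnk
                have := hjmin (Bsc P) (Finset.mem_image_of_mem Bsc hPF) hnk
                omega
              · exfalso
                have hsQP : Bsc (PP (jstar k)) = Bsc P := by rw [hQ.2, heq]
                have h3 : η k ∈ dIco (2 * Bmi P + 1) (-(Bsc P)) := Bωu P ▸ hηu
                have h4 : η k ∈ dIco (2 * Bmi (PP (jstar k))) (-(Bsc P)) := by
                  rw [← hsQP]
                  exact Bωl (PP (jstar k)) ▸ hηk
                have heq2 : upperHalf P.ω = lowerHalf (PP (jstar k)).ω := by
                  rw [Bωu, Bωl, hsQP]
                  exact dIco_eq h3 h4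
                have hcon1 : T.ξtop ∈ lowerHalf (PP (jstar k)).ω := heq2 ▸ hTu P hPT
                exact lower_upper_false hcon1 (hTu _ (hFT _ hQ.1))
              · exfalso
                have hsub : P.ω ⊆ lowerHalf (PP (jstar k)).ω :=
                  omega_nest_lower (upperHalf_subset' _ hηu) hηk (by rw [hQ.2]; exact hgt)
                exact lower_upper_false (hsub (upperHalf_subset' _ (hTu P hPT)))
                  (hTu _ (hFT _ hQ.1))
            · rintro ⟨hPF, hPk⟩
              refine ⟨hFT P hPF, ?_⟩
              have hlt : Bsc P < Bsc (PP (jstar k)) := by rw [hQ.2]; omega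
              have hsub : (PP (jstar k)).ω ⊆ upperHalf P.ω :=
                omega_nest (hFmem.mp hPF).2 (upperHalf_subset' _ hξQ) hlt
              exact hsub (lowerHalf_subset' _ hηk)
          · have hηk : η k = ξ := hηtop k hk
            rw [hηk]
            constructor
            · rintro ⟨hPT, hξu⟩
              have hPF : P ∈ F := hFmem.mpr ⟨hPsmem hTmem hPT, hξu⟩
              refine ⟨hPF, ?_⟩
              have := hscle P hPF
              omega
            · rintro ⟨hPF, _⟩
              exact ⟨hFT P hPF, (hFmem.mp hPF).2⟩
      · -- properly sorted case
        obtain ⟨hl1, hl2, hl3⟩ := hl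
        have huniqF : ∀ P ∈ F, ∀ P' ∈ F, Bsc P < Bsc P' → False := by
          intro P hP P' hP' hlt
          obtain ⟨T₁, hT₁, hPT₁⟩ := htree_of P (hFmem.mp hP).1
          obtain ⟨T₂, hT₂, hPT₂⟩ := htree_of P' (hFmem.mp hP').1
          have hnon : (T₂.Itop ∩ P.I).Nonempty :=
            ⟨x, ((hl1 T₂ hT₂).1.2.2 P' hPT₂).1 (hxI P' (hFmem.mp hP').1),
              hxI P (hFmem.mp hP).1⟩
          have hno := hl3 T₁ hT₁ P hPT₁ T₂ hT₂ hnon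
          apply hno
          have hsub : P'.ω ⊆ upperHalf P.ω :=
            omega_nest (hFmem.mp hP).2 (upperHalf_subset' _ (hFmem.mp hP').2) hlt
          exact hsub (lowerHalf_subset' _ ((hl1 T₂ hT₂).2.1 P' hPT₂))
        have hsingle : ∀ P ∈ F, ∀ P' ∈ F, P = P' := by
          intro P hP P' hP'
          rcases lt_trichotomy (Bsc P) (Bsc P') with h | h | h
          · exact absurd (huniqF P hP P' hP' h) not_false
          · exact tile_unique (hxI P (hFmem.mp hP).1) (hxI P' (hFmem.mp hP').1)
              (hFmem.mp hP).2 (hFmem.mp hP').2 h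
          · exact absurd (huniqF P' hP' P hP h) not_false
        obtain ⟨P₀, hP₀⟩ := hFne
        obtain ⟨T, hTmem, hP₀T⟩ := htree_of P₀ (hFmem.mp hP₀).1
        have hTl : LOverlapping T := (hl1 T hTmem).2.1
        refine ⟨T, hTmem, fun k => if k ≤ Bsc P₀ then T.ξtop else ξ, ?_, ?_, ?_⟩
        · -- monotone
          have hlt : T.ξtop < ξ := lt_of_halves (hTl P₀ hP₀T) (hFmem.mp hP₀).2
          intro k k' hkk
          dsimp only
          by_cases h1 : k' ≤ Bsc P₀
          · rw [if_pos (le_trans hkk h1), if_pos h1]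
          · rw [if_neg h1]
            by_cases h2 : k ≤ Bsc P₀
            · rw [if_pos h2]
              exact hlt.le
            · rw [if_neg h2]
        · -- nonneg
          intro k
          dsimp only
          by_cases h : k ≤ Bsc P₀
          · rw [if_pos h]
            exact (hl1 T hTmem).1.2.1
          · rw [if_neg h]
            exact hξ
        · -- key identity
          intro k P
          dsimp only
          by_cases h : k ≤ Bsc P₀
          · rw [if_pos h]
            constructor
            · rintro ⟨hPT, hcon⟩
              exact absurd hcon (fun hc => lower_upper_false (hTl P hPT) hc)
            · rintro ⟨hPF, hPk⟩
              have hPP₀ : P = P₀ := hsingle P hPF P₀ hP₀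
              rw [hPP₀] at hPk
              omega
          · rw [if_neg h]
            constructor
            · rintro ⟨hPT, hξu⟩
              have hPF : P ∈ F := hFmem.mpr ⟨hPsmem hTmem hPT, hξu⟩
              have hPP₀ : P = P₀ := hsingle P hPF P₀ hP₀
              refine ⟨hPF, ?_⟩
              rw [hPP₀]
              omega
            · rintro ⟨hPF, _⟩
              have hPP₀ : P = P₀ := hsingle P hPF P₀ hP₀
              exact ⟨hPP₀ ▸ hP₀T, (hFmem.mp hPF).2⟩
    -- conclude from the key identity
    obtain ⟨T, hTmem, η, hηmono, hη0, hkey⟩ := key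
    have hRHSval : ∀ k : ℤ,
        (∑ᶠ P ∈ T.carrier, c P * Set.indicator (upperHalf P.ω) (fun _ => (1:ℝ)) (η k)) =
        ∑ P ∈ F.filter (fun P => Bsc P < k), c P := by
      intro k
      rw [finsum_cond_eq_sum_of_cond_iff _ ?_]
      · apply Finset.sum_congr rfl
        intro P hP
        obtain ⟨h1, h2⟩ := Finset.mem_filter.mp hP
        have hm : η k ∈ upperHalf P.ω := ((hkey k P).mpr ⟨h1, h2⟩).2
        rw [Set.indicator_of_mem hm, mul_one]
      · intro P hne
        have hind : η k ∈ upperHalf P.ω := by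
          by_contra hno
          rw [Set.indicator_of_notMem hno, mul_zero] at hne
          exact hne rfl
        constructor
        · intro hPT
          exact Finset.mem_filter.mpr ((hkey k P).mp ⟨hPT, hind⟩)
        · intro hP
          obtain ⟨h1, h2⟩ := Finset.mem_filter.mp hP
          exact ((hkey k P).mpr ⟨h1, h2⟩).1
    have hfun : (fun k : ℤ => ∑ᶠ (P : Bitile) (_ : P ∈ Ps ∧ volume P.I < 2 ^ k),
        c P * Set.indicator (upperHalf P.ω) (fun _ => (1:ℝ)) ξ)
        = fun k : ℤ => (fun ξ' => ∑ᶠ P ∈ T.carrier,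
            c P * Set.indicator (upperHalf P.ω) (fun _ => (1:ℝ)) ξ') (η k) := by
      funext k
      rw [hLHS k]
      exact (hRHSval k).symm
    rw [hfun]
    refine le_trans (vnorm_comp_monotone hr0 (fun ξ' => ∑ᶠ P ∈ T.carrier,
      c P * Set.indicator (upperHalf P.ω) (fun _ => (1:ℝ)) ξ') η hηmono hη0) ?_
    exact le_iSup₂ (f := fun (T : WTree) (_ : T ∈ Ts) => vnorm r (Set.Ici 0) (fun ξ' =>
      ∑ᶠ P ∈ T.carrier, c P * Set.indicator (upperHalf P.ω) (fun _ => (1:ℝ)) ξ')) T hTmem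


end
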